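/- arXiv:1811.12568 — 5 statements merged into one kernel-verified Lean document; each statement's English description precedes it below -/
import Mathlib

section
/- Let M = (E, I) be a matroid and let I, J ∈ I be independent sets with |I| ≥ |J|. Then there exists an injection π : J \ I → I \ J such that for every e ∈ J \ I, the set I − π(e) + e is independent. -/
/-!
Hall's theorem reduces the claim to showing that every `S ⊆ J \ I` can be exchanged into at
least `|S|` elements of `I \ J`; call this neighbourhood `N`. If some `e ∈ S` extends `I`,
then `N = I \ J`, which is at least as large as `J \ I`. Otherwise put `P = (I ∩ J) ∪ N ⊆ I`.
No `e ∈ S` extends `P`: augmenting `P + e` inside `I + e` would remove an element of `I \ P`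
and thereby put a new element into `N`. Hence the independent set `(I ∩ J) ∪ S ⊆ P ∪ S` is no
larger than `P`, which gives `|S| ≤ |N|`.
-/

open scoped Classical
open Finset

/-- A matroid on a finite ground set `E`: a nonempty downward-closed family of
independent sets satisfying the exchange (augmentation) property. -/
structure FinMatroid (E : Type*) [DecidableEq E] [Fintype E] where
  Indep : Finset E → Prop
  empty_indep : Indep ∅
  subset_indep : ∀ ⦃S T : Finset E⦄, S ⊆ T → Indep T → Indep S
  exchange : ∀ ⦃S T : Finset E⦄, Indep S → Indep T → S.card < T.card →
      ∃ e ∈ T \ S, Indep (insert e S)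

variable {E : Type*} [DecidableEq E] [Fintype E]

/-- The rank of a set `S`: the (common, maximal) cardinality of maximal
independent subsets of `S`. -/
noncomputable def FinMatroid.rank (M : FinMatroid E) (S : Finset E) : ℕ :=
  (S.powerset.filter (fun I => M.Indep I)).sup Finset.card

/-- The span of a set `S`: the elements that do not increase the rank of `S`. -/
noncomputable def FinMatroid.span (M : FinMatroid E) (S : Finset E) : Finset E :=
  Finset.univ.filter (fun e => M.rank (insert e S) = M.rank S)

theorem Finset.exists_injOn_of_card_le_card_biUnion {α : Type*} [DecidableEq α]
    {A : Finset α} (t : α → Finset α) (hall : ∀ S ⊆ A, #S ≤ #(S.biUnion t)) :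
    ∃ π : α → α, Set.InjOn π A ∧ ∀ x ∈ A, π x ∈ t x := by
  have hall' : ∀ s : Finset A, #s ≤ #(s.biUnion (t ∘ Subtype.val)) := by
    intro s
    have hs := hall (s.image Subtype.val) (image_subset_iff.2 fun x _ => x.2)
    rwa [card_image_of_injective _ Subtype.val_injective, image_biUnion] at hs
  obtain ⟨f, hf_inj, hf_mem⟩ := (all_card_le_biUnion_card_iff_exists_injective _).1 hall'
  refine ⟨fun x => if h : x ∈ A then f ⟨x, h⟩ else x, ?_,
    fun x hx => by simpa [hx] using hf_mem ⟨x, hx⟩⟩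
  intro x hx y hy hxy
  simp only [mem_coe] at hx hy
  exact congrArg Subtype.val (hf_inj (by simpa [hx, hy] using hxy))

namespace FinMatroid

variable (M : FinMatroid E)

theorem card_le_of_forall_not_indep_insert {P Y C : Finset E} (hP : M.Indep P)
    (hmax : ∀ g ∈ Y \ P, ¬ M.Indep (insert g P)) (hCY : C ⊆ Y) (hC : M.Indep C) :
    #C ≤ #P := by
  by_contra! h
  obtain ⟨g, hg, hgP⟩ := M.exchange hP hC h
  rw [mem_sdiff] at hg
  exact hmax g (mem_sdiff.2 ⟨hCY hg.1, hg.2⟩) hgP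

theorem exists_maximal_indep {B Y : Finset E} (hB : M.Indep B) (hBY : B ⊆ Y) :
    ∃ D, B ⊆ D ∧ D ⊆ Y ∧ M.Indep D ∧ ∀ g ∈ Y \ D, ¬ M.Indep (insert g D) := by
  obtain ⟨D, hD, hmax⟩ := exists_max_image
    (Y.powerset.filter fun C => M.Indep C ∧ B ⊆ C) card ⟨B, by simp [hB, hBY]⟩
  simp only [mem_filter, mem_powerset] at hD
  refine ⟨D, hD.2.2, hD.1, hD.2.1, fun g hg hgD => ?_⟩
  rw [mem_sdiff] at hg
  have hcard := mt (hmax (insert g D)) (by simp [card_insert_of_notMem hg.2])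
  simp only [mem_filter, mem_powerset, not_and] at hcard
  exact hcard (insert_subset hg.1 hD.1) hgD (hD.2.2.trans (subset_insert _ _))

theorem exists_indep_insert_erase {I X : Finset E} {e : E} (hI : M.Indep I) (he : e ∉ I)
    (hXI : X ⊆ I) (hX : M.Indep (insert e X)) (hdep : ¬ M.Indep (insert e I)) :
    ∃ f ∈ I \ X, M.Indep (insert e (I.erase f)) := by
  obtain ⟨D, hXD, hDI, hD, hmax⟩ :=
    M.exists_maximal_indep hX (insert_subset_insert e hXI)
  have hID : #I ≤ #D := M.card_le_of_forall_not_indep_insert hD hmax (subset_insert e I) hI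
  obtain ⟨f, hfI, hfD⟩ : ∃ f ∈ insert e I, f ∉ D :=
    not_subset.1 fun h => hdep (by rwa [subset_antisymm hDI h] at hD)
  have heD : e ∈ D := hXD (mem_insert_self e X)
  have hfI : f ∈ I := (mem_insert.1 hfI).resolve_left (by rintro rfl; exact hfD heD)
  have hDsub : D ⊆ insert e (I.erase f) := fun x hx => by
    rcases mem_insert.1 (hDI hx) with rfl | hxI
    · exact mem_insert_self x _
    · exact mem_insert_of_mem (mem_erase.2 ⟨by rintro rfl; exact hfD hx, hxI⟩)
  have hDeq : D = insert e (I.erase f) := eq_of_subset_of_card_le hDsub (by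
    rw [card_insert_of_notMem (fun h => he (mem_of_mem_erase h)), card_erase_of_mem hfI]
    have := card_pos.2 ⟨f, hfI⟩
    omega)
  exact ⟨f, mem_sdiff.2 ⟨hfI, fun h => hfD (hXD (mem_insert_of_mem h))⟩, hDeq ▸ hD⟩

noncomputable def exchangeable (I J : Finset E) (e : E) : Finset E :=
  (I \ J).filter fun f => M.Indep (insert e (I.erase f))

theorem card_le_card_biUnion_exchangeable {I J : Finset E} (hI : M.Indep I) (hJ : M.Indep J)
    (hcard : #J ≤ #I) {S : Finset E} (hS : S ⊆ J \ I) :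
    #S ≤ #(S.biUnion (M.exchangeable I J)) := by
  set N := S.biUnion (M.exchangeable I J)
  have hSJ : S ⊆ J := hS.trans sdiff_subset
  have hSI : Disjoint (I ∩ J) S := disjoint_left.2 fun x hx hxS =>
    (mem_sdiff.1 (hS hxS)).2 (mem_inter.1 hx).1
  by_cases hext : ∃ e ∈ S, M.Indep (insert e I)
  · obtain ⟨e, heS, heI⟩ := hext
    have hN : I \ J ⊆ N := fun f hf => mem_biUnion.2 ⟨e, heS, mem_filter.2
      ⟨hf, M.subset_indep (insert_subset_insert e (erase_subset f I)) heI⟩⟩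
    calc #S ≤ #(J \ I) := card_le_card hS
      _ ≤ #(I \ J) := card_sdiff_le_card_sdiff_iff.2 hcard
      _ ≤ #N := card_le_card hN
  push Not at hext
  set P := (I ∩ J) ∪ N
  have hPI : P ⊆ I := union_subset inter_subset_left
    (biUnion_subset.2 fun e _ => (filter_subset _ _).trans sdiff_subset)
  have hmax : ∀ g ∈ (P ∪ S) \ P, ¬ M.Indep (insert g P) := by
    intro g hg hgP
    have hgS : g ∈ S := (mem_union.1 (mem_sdiff.1 hg).1).resolve_left (mem_sdiff.1 hg).2
    obtain ⟨f, hf, hfg⟩ := M.exists_indep_insert_erase hI (mem_sdiff.1 (hS hgS)).2 hPI hgP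
      (hext g hgS)
    obtain ⟨hfI, hfP⟩ := mem_sdiff.1 hf
    by_cases hfJ : f ∈ J
    · exact hfP (mem_union_left _ (mem_inter.2 ⟨hfI, hfJ⟩))
    · exact hfP (mem_union_right _ (mem_biUnion.2 ⟨g, hgS, mem_filter.2
        ⟨mem_sdiff.2 ⟨hfI, hfJ⟩, hfg⟩⟩))
  have hbound := M.card_le_of_forall_not_indep_insert (M.subset_indep hPI hI) hmax
    (union_subset_union_left subset_union_left)
    (M.subset_indep (union_subset inter_subset_right hSJ) hJ)
  rw [card_union_of_disjoint hSI] at hbound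
  have hPcard : #P ≤ #(I ∩ J) + #N := card_union_le _ _
  omega

end FinMatroid

/-- Brualdi's exchange lemma: for independent sets `I`, `J` with
`|I| ≥ |J|`, there is an injection `π : J \ I → I \ J` such that
`I − π(e) + e` is independent for every `e ∈ J \ I`. -/
theorem brualdi_exchange (M : FinMatroid E) (I J : Finset E)
    (hI : M.Indep I) (hJ : M.Indep J) (hcard : J.card ≤ I.card) :
    ∃ π : E → E,
      Set.InjOn π ↑(J \ I) ∧
      (∀ e ∈ J \ I, π e ∈ I \ J) ∧
      (∀ e ∈ J \ I, M.Indep (insert e (I.erase (π e)))) := by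
  obtain ⟨π, hinj, hπ⟩ := Finset.exists_injOn_of_card_le_card_biUnion (M.exchangeable I J)
    fun S hS => M.card_le_card_biUnion_exchangeable hI hJ hcard hS
  exact ⟨π, hinj, fun e he => (mem_filter.1 (hπ e he)).1,
    fun e he => (mem_filter.1 (hπ e he)).2⟩
end

section
/- Let M be a matroid on ground set E and let S₁, …, S_k ⊆ E be a sequence of sets with S_i ⊆ E \ span(S₁ ∪ ⋯ ∪ S_{i−1}) for each i. Then for any independent set T ∈ I, the set T ∩ span(S₁ ∪ ⋯ ∪ S_k) can be partitioned into sets T₁, …, T_k such that for each i, T_i ⊆ E \ span(S₁ ∪ ⋯ ∪ S_{i−1}) and |T_i| ≤ rank(S₁ ∪ ⋯ ∪ S_i) − rank(S₁ ∪ ⋯ ∪ S_{i−1}) ≤ |S_i|. -/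
open scoped Classical
open Finset

variable {E : Type*} [DecidableEq E] [Fintype E]

/-!
Write `U j = S₀ ∪ ⋯ ∪ S_{j-1}` and `c i = rank(U (i+1)) − rank(U i) ≤ |S i|`, so that
`rank(U j) = c 0 + ⋯ + c (j-1)`. The independent set `T₀ = T ∩ span(U k)` meets each
`span(U j)` in at most `rank(span(U j)) = rank(U j)` elements. These Hall-type capacity
conditions are all a greedy distribution needs: the last block receives as many elements of
`T₀` outside `span(U (k-1))` as its capacity `c (k-1)` allows, and what is left still satisfies
the conditions for the first `k - 1` blocks.
-/

lemma card_sdiff_le_of_card_inter_le {α : Type*} [DecidableEq α] {T P Y : Finset α} {s c : ℕ}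
    (hY : Y ⊆ T \ P) (hYc : #Y = min #(T \ P) c) (hP : #(T ∩ P) ≤ s) (hT : #T ≤ s + c) :
    #(T \ Y) ≤ s := by
  have hsdiff := card_sdiff_of_subset (hY.trans sdiff_subset)
  have hsplit := card_inter_add_card_sdiff T P
  omega

lemma exists_assignment_of_card_inter_le {α : Type*} [DecidableEq α] (P : ℕ → Finset α)
    (c : ℕ → ℕ) (k : ℕ) (T : Finset α) (hP : ∀ j ≤ k, #(T ∩ P j) ≤ ∑ i ∈ range j, c i)
    (hT : #T ≤ ∑ i ∈ range k, c i) :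
    ∃ f : α → ℕ, (∀ x ∈ T, f x < k ∧ x ∉ P (f x)) ∧ ∀ i, #{x ∈ T | f x = i} ≤ c i := by
  induction k generalizing T with
  | zero =>
    rw [sum_range_zero, Nat.le_zero, card_eq_zero] at hT
    subst hT
    exact ⟨fun _ => 0, by simp, by simp⟩
  | succ k ih =>
    obtain ⟨Y, hYsub, hYc⟩ := exists_subset_card_eq (min_le_left #(T \ P k) (c k))
    obtain ⟨g, hg, hgc⟩ := ih (T \ Y)
      (fun j hj => (card_le_card (inter_subset_inter_right sdiff_subset)).trans (hP j (by omega)))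
      (card_sdiff_le_of_card_inter_le hYsub hYc (hP k k.le_succ)
        (by rwa [sum_range_succ] at hT))
    refine ⟨fun x => if x ∈ Y then k else g x, fun x hx => ?_, fun i => ?_⟩
    · by_cases hxY : x ∈ Y
      · simp only [if_pos hxY]
        exact ⟨k.lt_succ_self, (mem_sdiff.1 (hYsub hxY)).2⟩
      · simp only [if_neg hxY]
        obtain ⟨hlt, havoid⟩ := hg x (mem_sdiff.2 ⟨hx, hxY⟩)
        exact ⟨by omega, havoid⟩
    · by_cases hik : i = k
      · subst hik
        have hblock : {x ∈ T | (if x ∈ Y then i else g x) = i} ⊆ Y := by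
          intro x hx
          by_contra hxY
          rw [mem_filter, if_neg hxY] at hx
          exact (hg x (mem_sdiff.2 ⟨hx.1, hxY⟩)).1.ne hx.2
        exact (card_le_card hblock).trans (hYc ▸ min_le_right _ _)
      · have hblock : {x ∈ T | (if x ∈ Y then k else g x) = i} ⊆ {x ∈ T \ Y | g x = i} := by
          intro x hx
          rw [mem_filter] at hx ⊢
          by_cases hxY : x ∈ Y
          · rw [if_pos hxY] at hx
            exact absurd hx.2.symm hik
          · rw [if_neg hxY] at hx
            exact ⟨mem_sdiff.2 ⟨hx.1, hxY⟩, hx.2⟩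
        exact (card_le_card hblock).trans (hgc i)

namespace FinMatroid

variable (M : FinMatroid E)

lemma indep_card_le_rank {X A : Finset E} (hX : M.Indep X) (hXA : X ⊆ A) : #X ≤ M.rank A :=
  le_sup (by simp [hXA, hX])

lemma exists_indep_subset_card_eq_rank (A : Finset E) :
    ∃ B ⊆ A, M.Indep B ∧ #B = M.rank A := by
  obtain ⟨B, hB, hBc⟩ := exists_mem_eq_sup (A.powerset.filter (fun I => M.Indep I))
    ⟨∅, by simp [M.empty_indep]⟩ Finset.card
  rw [mem_filter, mem_powerset] at hB
  exact ⟨B, hB.1, hB.2, hBc.symm⟩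

lemma rank_mono {A B : Finset E} (h : A ⊆ B) : M.rank A ≤ M.rank B := by
  obtain ⟨C, hCA, hCi, hCc⟩ := M.exists_indep_subset_card_eq_rank A
  exact hCc ▸ M.indep_card_le_rank hCi (hCA.trans h)

lemma rank_empty : M.rank ∅ = 0 := by
  obtain ⟨B, hB, -, hBc⟩ := M.exists_indep_subset_card_eq_rank ∅
  rw [← hBc, subset_empty.1 hB, card_empty]

lemma rank_span (A : Finset E) : M.rank (M.span A) = M.rank A := by
  refine le_antisymm ?_ (M.rank_mono fun a ha => by simp [span, insert_eq_self.2 ha])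
  obtain ⟨J, hJs, hJi, hJc⟩ := M.exists_indep_subset_card_eq_rank (M.span A)
  obtain ⟨B, hBs, hBi, hBc⟩ := M.exists_indep_subset_card_eq_rank A
  by_contra! h
  obtain ⟨e, he, hei⟩ := M.exchange hBi hJi (by omega)
  rw [mem_sdiff] at he
  have hespan : M.rank (insert e A) = M.rank A := by simpa [span] using hJs he.1
  have hcard := M.indep_card_le_rank hei (insert_subset_insert e hBs)
  rw [card_insert_of_notMem he.2] at hcard
  omega

lemma card_inter_span_le_rank {I : Finset E} (hI : M.Indep I) (A : Finset E) :
    #(I ∩ M.span A) ≤ M.rank A :=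
  M.rank_span A ▸ M.indep_card_le_rank (M.subset_indep inter_subset_left hI) inter_subset_right

lemma rank_union_le (A B : Finset E) : M.rank (A ∪ B) ≤ M.rank A + #B := by
  obtain ⟨J, hJs, hJi, hJc⟩ := M.exists_indep_subset_card_eq_rank (A ∪ B)
  have hA : #(J ∩ A) ≤ M.rank A :=
    M.indep_card_le_rank (M.subset_indep inter_subset_left hJi) inter_subset_right
  have hB : #(J \ A) ≤ #B := card_le_card fun x hx => by
    rw [mem_sdiff] at hx
    exact (mem_union.1 (hJs hx.1)).resolve_left hx.2
  have hsplit := card_inter_add_card_sdiff J A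
  omega

lemma sum_range_rank_biUnion_sub (S : ℕ → Finset E) (j : ℕ) :
    ∑ i ∈ range j, (M.rank ((range (i + 1)).biUnion S) - M.rank ((range i).biUnion S)) =
      M.rank ((range j).biUnion S) := by
  have hmono : Monotone fun i => M.rank ((range i).biUnion S) := fun _ _ h =>
    M.rank_mono (biUnion_subset_biUnion_of_subset_left S (range_mono h))
  rw [sum_range_tsub hmono, range_zero, biUnion_empty, rank_empty, tsub_zero]

lemma rank_biUnion_range_succ_sub_le (S : ℕ → Finset E) (i : ℕ) :
    M.rank ((range (i + 1)).biUnion S) - M.rank ((range i).biUnion S) ≤ #(S i) := by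
  have h := M.rank_union_le ((range i).biUnion S) (S i)
  rw [range_add_one, biUnion_insert, union_comm]
  omega

end FinMatroid

theorem brualdi_partition_span_general (M : FinMatroid E) (k : ℕ) (S : ℕ → Finset E)
    (T : Finset E) (hT : M.Indep T) :
    ∃ T' : ℕ → Finset E,
      (∀ i < k, ∀ j < k, i ≠ j → Disjoint (T' i) (T' j)) ∧
      ((Finset.range k).biUnion T' = T ∩ M.span ((Finset.range k).biUnion S)) ∧
      (∀ i < k, T' i ⊆ Finset.univ \ M.span ((Finset.range i).biUnion S)) ∧
      (∀ i < k,
        (T' i).card ≤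
          M.rank ((Finset.range (i + 1)).biUnion S) -
            M.rank ((Finset.range i).biUnion S) ∧
        M.rank ((Finset.range (i + 1)).biUnion S) -
            M.rank ((Finset.range i).biUnion S) ≤ (S i).card) := by
  set T₀ := T ∩ M.span ((range k).biUnion S)
  have hT₀ : M.Indep T₀ := M.subset_indep inter_subset_left hT
  obtain ⟨f, hf, hfc⟩ := exists_assignment_of_card_inter_le
    (fun j => M.span ((range j).biUnion S))
    (fun i => M.rank ((range (i + 1)).biUnion S) - M.rank ((range i).biUnion S)) k T₀
    (fun j _ => M.sum_range_rank_biUnion_sub S j ▸ M.card_inter_span_le_rank hT₀ _)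
    (M.sum_range_rank_biUnion_sub S k ▸ by
      simpa [T₀, inter_assoc] using M.card_inter_span_le_rank hT₀ ((range k).biUnion S))
  refine ⟨fun i => {x ∈ T₀ | f x = i}, fun i _ j _ hij => ?_,
    biUnion_filter_eq_of_maps_to fun x hx => mem_range.2 (hf x hx).1, fun i _ x hx => ?_,
    fun i _ => ⟨hfc i, M.rank_biUnion_range_succ_sub_le S i⟩⟩
  · exact disjoint_filter.2 fun x _ hi hj => hij (hi ▸ hj)
  · rw [mem_filter] at hx
    exact mem_sdiff.2 ⟨mem_univ x, hx.2 ▸ (hf x hx.1).2⟩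

/-- given sets `S 0, …, S (k-1)` with each `S i` disjoint from the
span of the union of the previous ones, any independent set `T` has its part
inside `span(S 0 ∪ ⋯ ∪ S (k-1))` partitioned into sets `T' 0, …, T' (k-1)` with
`T' i` outside the span of the first `i` blocks and
`|T' i| ≤ rank(U (i+1)) − rank(U i) ≤ |S i|`, where `U i = S 0 ∪ ⋯ ∪ S (i-1)`. -/
theorem brualdi_partition_span (M : FinMatroid E) (k : ℕ) (S : ℕ → Finset E)
    (hS : ∀ i < k, S i ⊆ Finset.univ \ M.span ((Finset.range i).biUnion S))
    (T : Finset E) (hT : M.Indep T) :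
    ∃ T' : ℕ → Finset E,
      (∀ i < k, ∀ j < k, i ≠ j → Disjoint (T' i) (T' j)) ∧
      ((Finset.range k).biUnion T' = T ∩ M.span ((Finset.range k).biUnion S)) ∧
      (∀ i < k, T' i ⊆ Finset.univ \ M.span ((Finset.range i).biUnion S)) ∧
      (∀ i < k,
        (T' i).card ≤
          M.rank ((Finset.range (i + 1)).biUnion S) -
            M.rank ((Finset.range i).biUnion S) ∧
        M.rank ((Finset.range (i + 1)).biUnion S) -
            M.rank ((Finset.range i).biUnion S) ≤ (S i).card) :=
  brualdi_partition_span_general M k S T hT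
end

section
/- Let E be a finite ground set, f : Set E → ℝ submodular, λ ≥ 0 with (1−ε)λ ≤ f({e}) ≤ λ for all e ∈ E, and let S be a random subset sampling each element independently with probability δ. Define Q = { e ∈ S : f_{S−e}(e) ≥ (1−ε)λ }. If E[|{ e ∈ E : f_S(e) ≤ (1−ε)λ }|] ≤ ε|E|, then E[f(Q)] ≥ (1−ε)² λ δ |E| = (1−ε)² λ E[|S|]. -/
/-!
Write `c = (1 - ε) λ`. If every `e` in `Q ⊆ S` has `f S - f (S - e) ≥ c`, then peeling off the
elements of `Q` one at a time and using submodularity gives `f Q ≥ c |Q|`; so it suffices that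
`E|Q| ≥ (1 - ε) δ |E|`. Since `[e ∈ S]` is independent of `S - e`,
`P(e ∈ Q) = δ P(f_{S-e}(e) ≥ c)`, and `f_S(e) > c ≥ 0` forces `e ∉ S`, i.e. `S - e = S`.
Hence `P(e ∈ Q) ≥ δ (1 - P(f_S(e) ≤ c))`, and summing over `e` and using the hypothesis
gives the bound.
-/

open scoped Classical
open Finset

/-- The probability that an independent `δ`-sample of the ground set equals `s`. -/
noncomputable def sampleWeight {E : Type*} [Fintype E] (δ : ℝ) (s : Finset E) : ℝ :=
  δ ^ s.card * (1 - δ) ^ (Fintype.card E - s.card)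

lemma sum_mul_card_eq_sum_sum_ite {ι α : Type*} [Fintype α] [DecidableEq α] (s : Finset ι)
    (μ : ι → ℝ) (F : ι → Finset α) :
    ∑ i ∈ s, μ i * (#(F i) : ℝ) = ∑ a, ∑ i ∈ s, μ i * if a ∈ F i then 1 else 0 := by
  rw [sum_comm]
  refine sum_congr rfl fun i _ => ?_
  rw [← mul_sum, sum_boole, filter_mem_eq_inter, univ_inter]

section Sampling

variable {E : Type*} [Fintype E]

lemma sum_sampleWeight (δ : ℝ) : ∑ s : Finset E, sampleWeight δ s = 1 := by
  simp [sampleWeight, Fintype.sum_pow_mul_eq_add_pow]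

lemma sampleWeight_nonneg {δ : ℝ} (hδ0 : 0 ≤ δ) (hδ1 : δ ≤ 1) (s : Finset E) :
    0 ≤ sampleWeight δ s :=
  mul_nonneg (pow_nonneg hδ0 _) (pow_nonneg (sub_nonneg.2 hδ1) _)

lemma one_sub_mul_sampleWeight_insert [DecidableEq E] {e : E} {t : Finset E} (he : e ∉ t) (δ : ℝ) :
    (1 - δ) * sampleWeight δ (insert e t) = δ * sampleWeight δ t := by
  have hlt : t.card + 1 ≤ Fintype.card E := card_insert_of_notMem he ▸ card_le_univ _
  obtain ⟨k, hk⟩ : ∃ k, Fintype.card E - t.card = k + 1 := ⟨Fintype.card E - t.card - 1, by omega⟩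
  have hk' : Fintype.card E - (t.card + 1) = k := by omega
  simp only [sampleWeight, card_insert_of_notMem he, hk, hk']
  ring

lemma sum_eq_sum_powerset_erase_add_insert [DecidableEq E] {β : Type*} [AddCommMonoid β] (e : E)
    (φ : Finset E → β) :
    ∑ s : Finset E, φ s = ∑ t ∈ (univ.erase e).powerset, (φ t + φ (insert e t)) := by
  rw [← powerset_univ, sum_add_distrib, ← sum_powerset_insert (notMem_erase e univ),
    insert_erase (mem_univ e)]

/-- Independence of `[e ∈ S]` from `S \ {e}`. -/
lemma sum_sampleWeight_mul_ite_mem [DecidableEq E] (δ : ℝ) (e : E) (g : Finset E → ℝ) :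
    ∑ s : Finset E, sampleWeight δ s * (if e ∈ s then g (s.erase e) else 0) =
      δ * ∑ s : Finset E, sampleWeight δ s * g (s.erase e) := by
  simp only [sum_eq_sum_powerset_erase_add_insert e, mul_sum]
  refine sum_congr rfl fun t ht => ?_
  have he : e ∉ t := (subset_erase.1 (mem_powerset.1 ht)).2
  rw [if_neg he, if_pos (mem_insert_self e t), erase_insert he, erase_eq_of_notMem he]
  linear_combination g t * one_sub_mul_sampleWeight_insert he δ

lemma sum_sampleWeight_mul_card [DecidableEq E] (δ : ℝ) :
    ∑ s : Finset E, sampleWeight δ s * (s.card : ℝ) = δ * Fintype.card E :=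
  calc ∑ s : Finset E, sampleWeight δ s * (s.card : ℝ)
      = ∑ e : E, ∑ s : Finset E, sampleWeight δ s * if e ∈ s then 1 else 0 :=
        sum_mul_card_eq_sum_sum_ite _ _ id
    _ = ∑ _e : E, δ := sum_congr rfl fun e _ => by
        simpa [sum_sampleWeight] using sum_sampleWeight_mul_ite_mem δ e fun _ => 1
    _ = δ * Fintype.card E := by simp [mul_comm]

end Sampling

lemma mul_card_le_of_le_sub_erase {α : Type*} [DecidableEq α] {f : Finset α → ℝ}
    (hf0 : f ∅ = 0) (hsub : ∀ A B : Finset α, f (A ∪ B) + f (A ∩ B) ≤ f A + f B)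
    {c : ℝ} {s Q : Finset α} (hQs : Q ⊆ s) (hQ : ∀ e ∈ Q, c ≤ f s - f (s.erase e)) :
    c * #Q ≤ f Q := by
  induction Q using Finset.induction_on with
  | empty => simp [hf0]
  | @insert a Q ha ih =>
    have has : a ∈ s := hQs (mem_insert_self a Q)
    have hQs' : Q ⊆ s.erase a := subset_erase.2 ⟨(subset_insert a Q).trans hQs, ha⟩
    have hunion : insert a Q ∪ s.erase a = s := by
      rw [insert_union, union_eq_right.2 hQs', insert_erase has]
    have hinter : insert a Q ∩ s.erase a = Q := by
      rw [insert_inter_of_notMem (notMem_erase a s), inter_eq_left.2 hQs']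
    have hstep := hsub (insert a Q) (s.erase a)
    rw [hunion, hinter] at hstep
    have hQ_le := ih (hQs'.trans (erase_subset a s)) fun e he => hQ e (mem_insert_of_mem he)
    have ha_le := hQ a (mem_insert_self a Q)
    rw [card_insert_of_notMem ha]
    push_cast
    linarith

section Greedy

variable {E : Type*} [Fintype E] [DecidableEq E] (f : Finset E → ℝ) {c δ : ℝ}

lemma mul_one_sub_prob_le_prob_mem (hδ0 : 0 ≤ δ) (hδ1 : δ ≤ 1) (hc : 0 ≤ c) (e : E) :
    δ * (1 - ∑ s : Finset E, sampleWeight δ s *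
        if f (insert e s) - f s ≤ c then 1 else 0) ≤
      ∑ s : Finset E, sampleWeight δ s *
        if e ∈ s ∧ c ≤ f (insert e (s.erase e)) - f (s.erase e) then 1 else 0 := by
  simp only [ite_and,
    sum_sampleWeight_mul_ite_mem δ e fun t => if c ≤ f (insert e t) - f t then (1 : ℝ) else 0]
  have hgood : 1 - ∑ s : Finset E, sampleWeight δ s * (if f (insert e s) - f s ≤ c then 1 else 0) =
      ∑ s : Finset E, sampleWeight δ s * (1 - if f (insert e s) - f s ≤ c then 1 else 0) := by
    simp only [mul_sub, mul_one, sum_sub_distrib, sum_sampleWeight]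
  rw [hgood]
  refine mul_le_mul_of_nonneg_left (sum_le_sum fun s _ => ?_) hδ0
  refine mul_le_mul_of_nonneg_left ?_ (sampleWeight_nonneg hδ0 hδ1 s)
  by_cases hbad : f (insert e s) - f s ≤ c
  · rw [if_pos hbad, sub_self]
    split_ifs <;> norm_num
  · -- a positive marginal value forces `e ∉ s`, so that `s.erase e = s`
    have hes : e ∉ s := fun hes => hbad (by rw [insert_eq_of_mem hes, sub_self]; exact hc)
    rw [if_neg hbad, erase_eq_of_notMem hes, if_pos (not_le.1 hbad).le, sub_zero]

lemma mul_sub_le_sum_sampleWeight_mul_card_filter (hδ0 : 0 ≤ δ) (hδ1 : δ ≤ 1) (hc : 0 ≤ c)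
    {ε : ℝ} (hbad : ∑ s : Finset E, sampleWeight δ s *
        (#(univ.filter fun e => f (insert e s) - f s ≤ c) : ℝ) ≤ ε * Fintype.card E) :
    δ * (1 - ε) * Fintype.card E ≤ ∑ s : Finset E, sampleWeight δ s *
        (#(s.filter fun e => c ≤ f (insert e (s.erase e)) - f (s.erase e)) : ℝ) := by
  rw [sum_mul_card_eq_sum_sum_ite] at hbad ⊢
  simp only [mem_filter, mem_univ, true_and] at hbad ⊢
  calc δ * (1 - ε) * Fintype.card E = ∑ _e : E, δ - δ * (ε * Fintype.card E) := by
        simp only [sum_const, card_univ, nsmul_eq_mul]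
        ring
    _ ≤ ∑ _e : E, δ - δ * ∑ e : E, ∑ s : Finset E, sampleWeight δ s *
          if f (insert e s) - f s ≤ c then 1 else 0 :=
        sub_le_sub_left (mul_le_mul_of_nonneg_left hbad hδ0) _
    _ = ∑ e : E, δ * (1 - ∑ s : Finset E, sampleWeight δ s *
          if f (insert e s) - f s ≤ c then 1 else 0) := by
        simp only [mul_sub, mul_one, mul_sum, sum_sub_distrib]
    _ ≤ _ := sum_le_sum fun e _ => mul_one_sub_prob_le_prob_mem f hδ0 hδ1 hc e

end Greedy

theorem greedy_sample_margin_general {E : Type*} [DecidableEq E] [Fintype E]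
    (f : Finset E → ℝ) (hf0 : f ∅ = 0)
    (hsub : ∀ A B : Finset E, f (A ∪ B) + f (A ∩ B) ≤ f A + f B)
    (ε lam δ : ℝ) (hε1 : ε ≤ 1) (hlam : 0 ≤ lam)
    (hδ0 : 0 ≤ δ) (hδ1 : δ ≤ 1)
    (hyp : ∑ s : Finset E, sampleWeight δ s *
        ((Finset.univ.filter
          (fun e : E => f (insert e s) - f s ≤ (1 - ε) * lam)).card : ℝ) ≤
      ε * (Fintype.card E : ℝ)) :
    (1 - ε) ^ 2 * lam * (δ * (Fintype.card E : ℝ)) ≤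
      ∑ s : Finset E, sampleWeight δ s *
        f (s.filter (fun e : E =>
          (1 - ε) * lam ≤ f (insert e (s.erase e)) - f (s.erase e))) ∧
    δ * (Fintype.card E : ℝ) =
      ∑ s : Finset E, sampleWeight δ s * (s.card : ℝ) := by
  set c := (1 - ε) * lam
  have hc : 0 ≤ c := mul_nonneg (sub_nonneg.2 hε1) hlam
  have hQ_value (s : Finset E) :
      c * #(s.filter fun e => c ≤ f (insert e (s.erase e)) - f (s.erase e)) ≤
        f (s.filter fun e => c ≤ f (insert e (s.erase e)) - f (s.erase e)) :=
    mul_card_le_of_le_sub_erase hf0 hsub (filter_subset _ s) fun e he => by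
      obtain ⟨hes, hmarg⟩ := mem_filter.1 he
      rwa [insert_erase hes] at hmarg
  refine ⟨?_, (sum_sampleWeight_mul_card δ).symm⟩
  calc (1 - ε) ^ 2 * lam * (δ * Fintype.card E) = c * (δ * (1 - ε) * Fintype.card E) := by ring
    _ ≤ c * ∑ s : Finset E, sampleWeight δ s *
          (#(s.filter fun e => c ≤ f (insert e (s.erase e)) - f (s.erase e)) : ℝ) :=
        mul_le_mul_of_nonneg_left
          (mul_sub_le_sum_sampleWeight_mul_card_filter f hδ0 hδ1 hc hyp) hc
    _ ≤ _ := by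
        rw [mul_sum]
        refine sum_le_sum fun s _ => ?_
        rw [mul_left_comm]
        exact mul_le_mul_of_nonneg_left (hQ_value s) (sampleWeight_nonneg hδ0 hδ1 s)

/-- claim (a) in the analysis of greedy sampling: with
`(1−ε)λ ≤ f({e}) ≤ λ` for all `e`, `S` an independent `δ`-sample, and
`Q = {e ∈ S : f_{S−e}(e) ≥ (1−ε)λ}`, if
`E[#{e : f_S(e) ≤ (1−ε)λ}] ≤ ε|E|` then
`E[f(Q)] ≥ (1−ε)²λδ|E| = (1−ε)²λ E[|S|]`. -/
theorem greedy_sample_margin {E : Type*} [DecidableEq E] [Fintype E]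
    (f : Finset E → ℝ) (hf0 : f ∅ = 0)
    (hsub : ∀ A B : Finset E, f (A ∪ B) + f (A ∩ B) ≤ f A + f B)
    (ε lam δ : ℝ) (hε : 0 ≤ ε) (hε1 : ε ≤ 1) (hlam : 0 ≤ lam)
    (hδ0 : 0 ≤ δ) (hδ1 : δ ≤ 1)
    (hmargin : ∀ e : E, (1 - ε) * lam ≤ f {e} ∧ f {e} ≤ lam)
    (hyp : ∑ s : Finset E, sampleWeight δ s *
        ((Finset.univ.filter
          (fun e : E => f (insert e s) - f s ≤ (1 - ε) * lam)).card : ℝ) ≤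
      ε * (Fintype.card E : ℝ)) :
    (1 - ε) ^ 2 * lam * (δ * (Fintype.card E : ℝ)) ≤
      ∑ s : Finset E, sampleWeight δ s *
        f (s.filter (fun e : E =>
          (1 - ε) * lam ≤ f (insert e (s.erase e)) - f (s.erase e))) ∧
    δ * (Fintype.card E : ℝ) =
      ∑ s : Finset E, sampleWeight δ s * (s.card : ℝ) :=
  greedy_sample_margin_general f hf0 hsub ε lam δ hε1 hlam hδ0 hδ1 hyp
end

section
/- Let f be a monotone submodular function with multilinear extension F. Then F is monotone concave: for any x, v ∈ [0,1]^E with x + v ∈ [0,1]^E and v ≥ 0, the map t ↦ F(x + t·v) is concave on [0,1]. In particular, for any x ∈ [0,1]^E and ε ∈ (0,1), F(ε·x) ≥ ε·F(x). -/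
open Finset

/-!
Submodularity gives diminishing returns for `F`: if `0 ≤ y ≤ z`, `0 ≤ w` and `z + w ≤ 1`, then
`F(z + w) - F(z) ≤ F(y + w) - F(y)`. To see this, draw independently for each element one of
four outcomes with probabilities `y, w, z - y, 1 - z - w`; the resulting random sets `A` and `B`
have marginals `y + w` and `z`, while `A ∪ B` and `A ∩ B` have marginals `z + w` and `y`, so the
inequality is the expectation of `f (A ∪ B) + f (A ∩ B) ≤ f A + f B`. Along a segment
`t ↦ x + t v` with `v ≥ 0` this says the increments of the polynomial `t ↦ F(x + t v)` decrease,
so its derivative is antitone and it is concave. Comparing with the endpoints `0` and `x` and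
using `F 0 = f ∅ = 0` gives `F(ε x) ≥ ε F(x)`.
-/

/-- The multilinear extension of a set function `f`. -/
noncomputable def multilinear {E : Type*} [DecidableEq E] [Fintype E]
    (f : Finset E → ℝ) (x : E → ℝ) : ℝ :=
  ∑ S : Finset E, f S * (∏ e ∈ S, x e) * ∏ e ∈ Sᶜ, (1 - x e)

theorem concaveOn_Icc_of_sub_antitone {g : ℝ → ℝ} {a b : ℝ} (hg : Differentiable ℝ g)
    (h : ∀ s t u, a ≤ s → s ≤ t → 0 < u → t + u ≤ b → g (t + u) - g t ≤ g (s + u) - g s) :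
    ConcaveOn ℝ (Set.Icc a b) g := by
  refine AntitoneOn.concaveOn_of_deriv (convex_Icc a b) hg.continuous.continuousOn
    hg.differentiableOn ?_
  rw [interior_Icc]
  intro s hs t ht hst
  refine le_of_tendsto_of_tendsto (hg t).hasDerivAt.tendsto_slope_zero_right
    (hg s).hasDerivAt.tendsto_slope_zero_right ?_
  filter_upwards [Ioo_mem_nhdsGT (sub_pos.2 ht.2)] with u hu
  exact smul_le_smul_of_nonneg_left (h s t u hs.1.le hst hu.1 (by linarith [hu.2]))
    (inv_nonneg.2 hu.1.le)

section
variable {E α : Type*} [DecidableEq E] [Fintype E] [Fintype α]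

theorem sum_prod_mul_filter_eq (f : Finset E → ℝ) (μ : E → α → ℝ) (φ : α → Prop)
    [DecidablePred φ] :
    ∑ c : E → α, (∏ e, μ e (c e)) * f {e | φ (c e)} =
      ∑ S : Finset E, f S * (∏ e ∈ S, ∑ a with φ a, μ e a) *
        ∏ e ∈ Sᶜ, ∑ a with ¬φ a, μ e a := by
  rw [← sum_fiberwise univ (fun c : E → α => ({e | φ (c e)} : Finset E))]
  refine sum_congr rfl fun S _ => ?_
  have hfiber : ({c | ({e | φ (c e)} : Finset E) = S} : Finset (E → α)) =
      Fintype.piFinset fun e => {a | φ a ↔ e ∈ S} := by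
    ext c
    simp [Finset.ext_iff]
  calc ∑ c ∈ {c : E → α | ({e | φ (c e)} : Finset E) = S}, (∏ e, μ e (c e)) * f {e | φ (c e)}
      = f S * ∑ c ∈ Fintype.piFinset fun e => {a | φ a ↔ e ∈ S}, ∏ e, μ e (c e) := by
        rw [mul_sum, ← hfiber]
        exact sum_congr rfl fun c hc => by rw [(mem_filter.mp hc).2, mul_comm]
    _ = f S * ∏ e, ∑ a with φ a ↔ e ∈ S, μ e a := by rw [prod_univ_sum]
    _ = _ := by
        rw [← prod_mul_prod_compl (s := S), ← mul_assoc]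
        congr 1
        · exact congrArg (f S * ·) (prod_congr rfl fun e he => by simp [he])
        · exact prod_congr rfl fun e he => by simp [mem_compl.mp he]

theorem multilinear_eq_sum_coupling (f : Finset E → ℝ) (μ : E → α → ℝ) (φ : α → Prop)
    [DecidablePred φ] (hμ : ∀ e, ∑ a, μ e a = 1) :
    multilinear f (fun e => ∑ a with φ a, μ e a) =
      ∑ c : E → α, (∏ e, μ e (c e)) * f {e | φ (c e)} := by
  have hcompl : ∀ e, ∑ a with ¬φ a, μ e a = 1 - ∑ a with φ a, μ e a := fun e => by
    rw [← hμ e, ← sum_filter_add_sum_filter_not univ φ]; ring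
  simp only [sum_prod_mul_filter_eq, multilinear, hcompl]

theorem multilinear_zero (f : Finset E → ℝ) : multilinear f 0 = f ∅ := by
  rw [multilinear, sum_eq_single ∅]
  · simp
  · intro S _ hS
    obtain ⟨e, he⟩ := nonempty_iff_ne_empty.mpr hS
    rw [prod_eq_zero he rfl]; ring
  · simp

theorem differentiable_multilinear (f : Finset E → ℝ) :
    Differentiable ℝ (multilinear f) := by
  unfold multilinear
  fun_prop

theorem multilinear_add_add_le_of_submodular (f : Finset E → ℝ)
    (hsub : ∀ A B : Finset E, f (A ∪ B) + f (A ∩ B) ≤ f A + f B) {y z w : E → ℝ}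
    (hy : 0 ≤ y) (hyz : y ≤ z) (hw : 0 ≤ w) (hzw : z + w ≤ 1) :
    multilinear f (z + w) + multilinear f y ≤ multilinear f (y + w) + multilinear f z := by
  let μ : E → Bool × Bool → ℝ := fun e a =>
    match a with
    | (true, true) => y e
    | (true, false) => w e
    | (false, true) => z e - y e
    | (false, false) => 1 - z e - w e
  have hμ : ∀ e, ∑ a, μ e a = 1 := fun e => by simp [μ, Fintype.sum_prod_type]; ring
  have hμ_nonneg : ∀ e a, 0 ≤ μ e a := by
    intro e a
    have hy_e : 0 ≤ y e := hy e
    have hyz_e : y e ≤ z e := hyz e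
    have hw_e : 0 ≤ w e := hw e
    have hzw_e : z e + w e ≤ 1 := hzw e
    rcases a with ⟨_ | _, _ | _⟩ <;> simp only [μ] <;> linarith
  have marginal : ∀ (φ : Bool × Bool → Prop) [DecidablePred φ] (p : E → ℝ),
      (∀ e, ∑ a with φ a, μ e a = p e) →
      multilinear f p = ∑ c : E → Bool × Bool, (∏ e, μ e (c e)) * f {e | φ (c e)} :=
    fun φ _ p hp => by rw [← multilinear_eq_sum_coupling f μ φ hμ]; simp only [hp]
  rw [marginal (fun a => a.1 ∨ a.2) (z + w), marginal (fun a => a.1 ∧ a.2) y,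
    marginal (fun a => a.1) (y + w), marginal (fun a => a.2) z,
    ← sum_add_distrib, ← sum_add_distrib]
  · refine sum_le_sum fun c _ => ?_
    rw [← mul_add, ← mul_add, filter_or, filter_and]
    exact mul_le_mul_of_nonneg_left (hsub _ _) (prod_nonneg fun e _ => hμ_nonneg e (c e))
  all_goals intro e; simp [μ, sum_filter, Fintype.sum_prod_type]
  ring

theorem concaveOn_multilinear_line (f : Finset E → ℝ)
    (hsub : ∀ A B : Finset E, f (A ∪ B) + f (A ∩ B) ≤ f A + f B) {x v : E → ℝ}
    (hx : 0 ≤ x) (hv : 0 ≤ v) (hxv : x + v ≤ 1) :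
    ConcaveOn ℝ (Set.Icc 0 1) fun t : ℝ => multilinear f (x + t • v) := by
  refine concaveOn_Icc_of_sub_antitone ((differentiable_multilinear f).comp (by fun_prop))
    fun s t u hs hst hu htu => ?_
  have key := multilinear_add_add_le_of_submodular f hsub (y := x + s • v) (z := x + t • v)
    (w := u • v) (add_nonneg hx (smul_nonneg hs hv))
    (add_le_add_right (smul_le_smul_of_nonneg_right hst hv) x) (smul_nonneg hu.le hv)
    (calc x + t • v + u • v = x + (t + u) • v := by rw [add_smul, add_assoc]
      _ ≤ x + (1 : ℝ) • v := add_le_add_right (smul_le_smul_of_nonneg_right htu hv) x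
      _ ≤ 1 := by rwa [one_smul])
  simp only [add_assoc, ← add_smul] at key
  linarith

end

theorem multilinear_monotone_concave_general {E : Type*} [DecidableEq E] [Fintype E]
    (f : Finset E → ℝ) (hf0 : f ∅ = 0)
    (hsub : ∀ A B : Finset E, f (A ∪ B) + f (A ∩ B) ≤ f A + f B) :
    (∀ x v : E → ℝ, (∀ e, 0 ≤ x e) → (∀ e, 0 ≤ v e) → (∀ e, x e + v e ≤ 1) →
      ConcaveOn ℝ (Set.Icc (0 : ℝ) 1) (fun t : ℝ => multilinear f (x + t • v))) ∧
    (∀ x : E → ℝ, (∀ e, 0 ≤ x e ∧ x e ≤ 1) → ∀ ε ∈ Set.Ioo (0 : ℝ) 1,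
      ε * multilinear f x ≤ multilinear f (ε • x)) := by
  refine ⟨fun x v hx hv hxv => concaveOn_multilinear_line f hsub hx hv hxv, ?_⟩
  intro x hx ε hε
  have hconc := concaveOn_multilinear_line f hsub le_rfl (fun e => (hx e).1)
    (by rw [zero_add]; exact fun e => (hx e).2)
  have hchord := hconc.2 (Set.right_mem_Icc.2 zero_le_one) (Set.left_mem_Icc.2 zero_le_one)
    hε.1.le (sub_nonneg.2 hε.2.le) (add_sub_cancel ε 1)
  simpa [multilinear_zero, hf0] using hchord

/-- the multilinear extension `F` of a (normalized) monotone
submodular function is monotone concave: for `x, v ≥ 0` with `x + v ∈ [0,1]^E`,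
the map `t ↦ F(x + t v)` is concave on `[0,1]`; in particular
`F(ε x) ≥ ε F(x)` for `x ∈ [0,1]^E` and `ε ∈ (0,1)`. -/
theorem multilinear_monotone_concave {E : Type*} [DecidableEq E] [Fintype E]
    (f : Finset E → ℝ) (hf0 : f ∅ = 0)
    (hmono : ∀ A B : Finset E, A ⊆ B → f A ≤ f B)
    (hsub : ∀ A B : Finset E, f (A ∪ B) + f (A ∩ B) ≤ f A + f B) :
    (∀ x v : E → ℝ, (∀ e, 0 ≤ x e) → (∀ e, 0 ≤ v e) → (∀ e, x e + v e ≤ 1) →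
      ConcaveOn ℝ (Set.Icc (0 : ℝ) 1) (fun t : ℝ => multilinear f (x + t • v))) ∧
    (∀ x : E → ℝ, (∀ e, 0 ≤ x e ∧ x e ≤ 1) → ∀ ε ∈ Set.Ioo (0 : ℝ) 1,
      ε * multilinear f x ≤ multilinear f (ε • x)) :=
  multilinear_monotone_concave_general f hf0 hsub
end

section
/- Let f : Set E → ℝ be a set function and F its multilinear extension. Then f is submodular if and only if for all x ∈ [0,1]^E and all distinct e, e' ∈ E, the mixed second partial derivative ∂²F/∂x_e ∂x_{e'}(x) ≤ 0. -/
/-!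
The multilinear extension `F` is affine in each coordinate, and `∂F/∂x_e` is the multilinear
extension of the discrete derivative `S ↦ f (S ∪ {e}) - f (S \ {e})`. Hence the mixed partial
`∂²F/∂x_e∂x_{e'}` is the multilinear extension of the second difference of `f` in `e, e'`:
on `[0,1]^E` it is an average of these second differences, and at the vertex `1_S` it equals the
second difference at `S`. Submodularity is equivalent to all second differences being `≤ 0`,
the converse direction by telescoping over the elements of `B \ A`.
-/

open Finset

section SetFunction

variable {E : Type*} [DecidableEq E] {f : Finset E → ℝ} {e e' : E}

def discreteDeriv (f : Finset E → ℝ) (e : E) (S : Finset E) : ℝ :=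
  f (insert e S) - f (S.erase e)

theorem discreteDeriv_discreteDeriv_nonpos
    (hf : ∀ A B : Finset E, f (A ∪ B) + f (A ∩ B) ≤ f A + f B) (he : e ≠ e') (S : Finset E) :
    discreteDeriv (discreteDeriv f e') e S ≤ 0 := by
  have hU : insert e (S.erase e') ∪ insert e' (S.erase e) = insert e' (insert e S) := by
    ext i; simp only [mem_union, mem_insert, mem_erase]; tauto
  have hI : insert e (S.erase e') ∩ insert e' (S.erase e) = (S.erase e).erase e' := by
    ext i; simp only [mem_inter, mem_insert, mem_erase]
    constructor
    · rintro ⟨rfl | hi, rfl | hi⟩ <;> tauto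
    · tauto
  have := hf (insert e (S.erase e')) (insert e' (S.erase e))
  rw [hU, hI] at this
  simp only [discreteDeriv, erase_insert_of_ne he]
  linarith

theorem discreteDeriv_discreteDeriv_of_notMem (he : e ≠ e') {S : Finset E} (heS : e ∉ S)
    (he'S : e' ∉ S) :
    discreteDeriv (discreteDeriv f e') e S =
      f (insert e' (insert e S)) - f (insert e S) - f (insert e' S) + f S := by
  have he'eS : e' ∉ insert e S := by simp [he.symm, he'S]
  simp only [discreteDeriv, erase_eq_of_notMem heS, erase_eq_of_notMem he'S,
    erase_eq_of_notMem he'eS]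
  ring

theorem insert_add_le_insert_add_of_subset
    (hf : ∀ e e', e ≠ e' → ∀ S, e ∉ S → e' ∉ S →
      f (insert e' (insert e S)) + f S ≤ f (insert e S) + f (insert e' S))
    {S T : Finset E} (hST : S ⊆ T) (heT : e ∉ T) :
    f (insert e T) + f S ≤ f (insert e S) + f T := by
  suffices h : ∀ D : Finset E, e ∉ S ∪ D →
      f (insert e (S ∪ D)) + f S ≤ f (insert e S) + f (S ∪ D) by
    rw [← union_sdiff_of_subset hST] at heT ⊢
    exact h _ heT
  intro D
  induction D using Finset.induction_on with
  | empty => simp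
  | @insert p D _ ih =>
    intro he
    rw [union_insert] at he ⊢
    by_cases hp : p ∈ S ∪ D
    · rw [insert_eq_of_mem hp] at he ⊢
      exact ih he
    · have hep : e ≠ p := fun h => he (h ▸ mem_insert_self _ _)
      have he' : e ∉ S ∪ D := fun h => he (mem_insert_of_mem h)
      have := hf p e hep.symm (S ∪ D) hp he'
      linarith [ih he']

theorem submodular_of_pairwise
    (hf : ∀ e e', e ≠ e' → ∀ S, e ∉ S → e' ∉ S →
      f (insert e' (insert e S)) + f S ≤ f (insert e S) + f (insert e' S))
    (A B : Finset E) : f (A ∪ B) + f (A ∩ B) ≤ f A + f B := by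
  suffices h : ∀ D : Finset E, Disjoint A D → f (A ∪ D) + f (A ∩ B) ≤ f A + f (A ∩ B ∪ D) by
    have hB : A ∩ B ∪ B \ A = B := by rw [inter_comm]; exact sup_inf_sdiff B A
    simpa only [union_sdiff_self_eq_union, hB] using h (B \ A) disjoint_sdiff
  intro D
  induction D using Finset.induction_on with
  | empty => simp
  | @insert p D hpD ih =>
    rw [disjoint_insert_right, union_insert, union_insert]
    rintro ⟨hpA, hAD⟩
    have hp : p ∉ A ∪ D := by simp [hpA, hpD]
    have := insert_add_le_insert_add_of_subset hf
      (union_subset_union_left (inter_subset_left : A ∩ B ⊆ A)) hp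
    linarith [ih hAD]

end SetFunction

section Multilinear

variable {E : Type*} [DecidableEq E] [Fintype E]

theorem multilinear_sub (f g : Finset E → ℝ) (x : E → ℝ) :
    multilinear (fun S => f S - g S) x = multilinear f x - multilinear g x := by
  simp only [multilinear, sub_mul, sum_sub_distrib]

theorem multilinear_eq_sum_powerset_erase (f : Finset E → ℝ) (x : E → ℝ) (e : E) :
    multilinear f x = ∑ T ∈ (univ.erase e).powerset,
      ((1 - x e) * f T + x e * f (insert e T)) *
        ((∏ i ∈ T, x i) * ∏ i ∈ Tᶜ.erase e, (1 - x i)) := by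
  rw [multilinear]
  conv_lhs => rw [← powerset_univ, ← insert_erase (mem_univ e),
    sum_powerset_insert (notMem_erase e univ), ← sum_add_distrib]
  refine sum_congr rfl fun T hT => ?_
  have heT : e ∉ T := fun h => notMem_erase e univ (mem_powerset.mp hT h)
  rw [prod_insert heT, compl_insert,
    ← mul_prod_erase Tᶜ (fun i => 1 - x i) (mem_compl.mpr heT)]
  ring

theorem multilinear_update (f : Finset E → ℝ) (x : E → ℝ) (e : E) (a : ℝ) :
    multilinear f (Function.update x e a) =
      (1 - a) * multilinear (fun S => f (S.erase e)) x +
        a * multilinear (fun S => f (insert e S)) x := by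
  simp only [multilinear_eq_sum_powerset_erase _ _ e, mul_sum, ← sum_add_distrib,
    Function.update_self, insert_idem]
  refine sum_congr rfl fun T hT => ?_
  have heT : e ∉ T := fun h => notMem_erase e univ (mem_powerset.mp hT h)
  have hT : ∏ i ∈ T, Function.update x e a i = ∏ i ∈ T, x i :=
    prod_congr rfl fun i hi => Function.update_of_ne (ne_of_mem_of_not_mem hi heT) _ _
  have hTc : ∏ i ∈ Tᶜ.erase e, (1 - Function.update x e a i) = ∏ i ∈ Tᶜ.erase e, (1 - x i) :=
    prod_congr rfl fun i hi => by rw [Function.update_of_ne (ne_of_mem_erase hi)]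
  rw [hT, hTc, erase_eq_of_notMem heT, erase_insert heT]
  ring

theorem deriv_one_sub_mul_add_mul (c d t : ℝ) :
    deriv (fun a : ℝ => (1 - a) * c + a * d) t = d - c := by
  have h : HasDerivAt (fun a : ℝ => (1 - a) * c + a * d) (-1 * c + 1 * d) t :=
    (((hasDerivAt_id t).const_sub 1).mul_const c).add ((hasDerivAt_id t).mul_const d)
  rw [h.deriv]
  ring

theorem deriv_multilinear_update (f : Finset E → ℝ) (x : E → ℝ) (e : E) (t : ℝ) :
    deriv (fun a => multilinear f (Function.update x e a)) t =
      multilinear (discreteDeriv f e) x := by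
  simp only [multilinear_update, deriv_one_sub_mul_add_mul, ← multilinear_sub]
  rfl

theorem multilinear_nonpos {f : Finset E → ℝ} (hf : ∀ S, f S ≤ 0) {x : E → ℝ}
    (hx : ∀ i, x i ∈ Set.Icc (0 : ℝ) 1) : multilinear f x ≤ 0 :=
  sum_nonpos fun S _ => mul_nonpos_of_nonpos_of_nonneg
    (mul_nonpos_of_nonpos_of_nonneg (hf S) (prod_nonneg fun i _ => (hx i).1))
    (prod_nonneg fun i _ => sub_nonneg.mpr (hx i).2)

theorem multilinear_indicator (f : Finset E → ℝ) (S : Finset E) :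
    multilinear f (fun i => if i ∈ S then 1 else 0) = f S := by
  rw [multilinear, sum_eq_single S]
  · rw [prod_eq_one fun i hi => if_pos hi, prod_eq_one fun i hi => by simp [mem_compl.mp hi],
      mul_one, mul_one]
  · intro T _ hTS
    by_cases hTS' : T ⊆ S
    · obtain ⟨i, hiS, hiT⟩ := not_subset.mp fun hST => hTS (Subset.antisymm hTS' hST)
      rw [prod_eq_zero (mem_compl.mpr hiT) (by simp [hiS]), mul_zero]
    · obtain ⟨i, hiT, hiS⟩ := not_subset.mp hTS'
      rw [prod_eq_zero hiT (if_neg hiS), mul_zero, zero_mul]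
  · simp

theorem deriv_deriv_multilinear_update_update (f : Finset E → ℝ) (x : E → ℝ) (e e' : E)
    (s t : ℝ) :
    deriv (fun a => deriv (fun b =>
        multilinear f (Function.update (Function.update x e a) e' b)) t) s =
      multilinear (discreteDeriv (discreteDeriv f e') e) x := by
  simp only [deriv_multilinear_update]

end Multilinear

/-- `f` is submodular iff all mixed second partial derivatives
`∂²F/∂x_e∂x_{e'}` (for `e ≠ e'`) of its multilinear extension `F` are
nonpositive on `[0,1]^E`. -/
theorem submodular_iff_mixed_partials_nonpos {E : Type*} [DecidableEq E] [Fintype E]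
    (f : Finset E → ℝ) :
    (∀ A B : Finset E, f (A ∪ B) + f (A ∩ B) ≤ f A + f B) ↔
    (∀ x : E → ℝ, (∀ e, x e ∈ Set.Icc (0 : ℝ) 1) → ∀ e e' : E, e ≠ e' →
      deriv (fun a : ℝ =>
          deriv (fun b : ℝ =>
              multilinear f (Function.update (Function.update x e a) e' b))
            (x e'))
        (x e) ≤ 0) := by
  constructor
  · intro hf x hx e e' he
    rw [deriv_deriv_multilinear_update_update]
    exact multilinear_nonpos (discreteDeriv_discreteDeriv_nonpos hf he) hx
  · intro hF
    refine submodular_of_pairwise fun e e' he S heS he'S => ?_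
    have hx : ∀ i, (if i ∈ S then 1 else 0 : ℝ) ∈ Set.Icc (0 : ℝ) 1 := fun i => by
      split_ifs <;> simp
    have := hF _ hx e e' he
    rw [deriv_deriv_multilinear_update_update, multilinear_indicator,
      discreteDeriv_discreteDeriv_of_notMem he heS he'S] at this
    linarith
end
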